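/- For the PI Lax matrices L₁ = [[0,1],[y−z,0]] and A₁ = [[−y', 2y+4z],[−x−y²+2yz−4z², y']], the zero-curvature equation D_z L₁ − D_x A₁ + [L₁, A₁] = 0 holds identically in z if and only if y'' = 3y² + x. -/
import Mathlib


open Matrix

/-- PI zero-curvature: `D_z L₁ - D_x A₁ + [L₁, A₁] = 0` identically in `z`
iff `y'' = 3y² + x`. -/
theorem stmt_3 (y y' y'' : ℂ → ℂ)
    (hy : ∀ x, HasDerivAt y (y' x) x)
    (hy' : ∀ x, HasDerivAt y' (y'' x) x) :
    (∀ z x : ℂ,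
        let L₁ : Matrix (Fin 2) (Fin 2) ℂ := !![0, 1; y x - z, 0]
        let A₁ : Matrix (Fin 2) (Fin 2) ℂ :=
          !![-(y' x), 2 * y x + 4 * z;
             -x - (y x) ^ 2 + 2 * y x * z - 4 * z ^ 2, y' x]
        let DzL₁ : Matrix (Fin 2) (Fin 2) ℂ := !![0, 0; -1, 0]
        let DxA₁ : Matrix (Fin 2) (Fin 2) ℂ :=
          !![-(y'' x), 2 * y' x;
             -1 - 2 * y x * y' x + 2 * y' x * z, y'' x]
        DzL₁ - DxA₁ + (L₁ * A₁ - A₁ * L₁) = 0) ↔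
      (∀ x : ℂ, y'' x = 3 * (y x) ^ 2 + x) := by
  constructor
  · intro h x
    have := h 0 x
    simp only [Matrix.mul_fin_two] at this
    have h00 := congrFun (congrFun this 0) 0
    simp [Matrix.ext_iff] at h00 ⊢
    linear_combination h00
  · intro h z x
    ext i j
    fin_cases i <;> fin_cases j <;>
      simp [Matrix.mul_fin_two, h x] <;> ring
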